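/- Let x : ℝ → E be a continuously differentiable 1-periodic curve into a real inner product space E with zero mean, i.e. ∫₀¹ x(t) dt = 0. Then the L² norms satisfy ∫₀¹ ‖x(t)‖² dt ≤ (1/(2π))² · ∫₀¹ ‖x'(t)‖² dt. -/

import Mathlib

/-! For a complex-valued curve, Parseval's identity writes both integrals as sums of squared
Fourier coefficients, and integration by parts (the boundary term vanishes as `f a = f b`) gives
`‖cₙ(f)‖ = (b - a) / (2π|n|) ‖cₙ(f')‖`; the zero mean kills `c₀(f)`, so the inequality holds
term by term. A vector-valued curve and its derivative take values in a separable closed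
subspace, which has a countable Hilbert basis: there `‖x t‖²` is the sum of the squares of the
real coordinates `⟪eᵢ, x t⟫`, each coordinate obeys the scalar inequality, and the countable sums
commute with the integrals. -/

open Real MeasureTheory Set intervalIntegral
open scoped InnerProductSpace ENNReal

theorem Orthonormal.countable_of_separableSpace {𝕜 H ι : Type*} [RCLike 𝕜]
    [NormedAddCommGroup H] [InnerProductSpace 𝕜 H] [TopologicalSpace.SeparableSpace H] {v : ι → H}
    (hv : Orthonormal 𝕜 v) : Countable ι := by
  refine Pairwise.countable_of_isOpen_disjoint (s := fun i => Metric.ball (v i) (1 / 2))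
    (fun i j hij => Metric.ball_disjoint_ball ?_) (fun _ => Metric.isOpen_ball)
    (fun i => Metric.nonempty_ball.2 one_half_pos)
  have hsq : dist (v i) (v j) ^ 2 = 2 := by
    rw [dist_eq_norm, @norm_sub_sq 𝕜, hv.1 i, hv.1 j, hv.2 hij]
    norm_num
  nlinarith [dist_nonneg (x := v i) (y := v j)]

theorem ContinuousOn.memLp_restrict_Ioc {E : Type*} [NormedAddCommGroup E] {f : ℝ → E}
    {a b : ℝ} (hf : ContinuousOn f (uIcc a b)) (p : ℝ≥0∞) :
    MemLp f p (volume.restrict (Ioc a b)) := by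
  have hsub : Ioc a b ⊆ uIcc a b := Ioc_subset_uIoc.trans uIoc_subset_uIcc
  obtain ⟨C, hC⟩ := isCompact_uIcc.exists_bound_of_continuousOn hf
  exact MemLp.of_bound ((hf.mono hsub).aestronglyMeasurable measurableSet_Ioc) C
    ((ae_restrict_iff' measurableSet_Ioc).2 (.of_forall fun t ht => hC t (hsub ht)))

theorem intervalIntegral.hasSum_integral_of_nonneg {ι : Type*} [Countable ι]
    {F : ι → ℝ → ℝ} {S : ℝ → ℝ} {a b : ℝ} (hF : ∀ i, IntervalIntegrable (F i) volume a b)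
    (hS : IntervalIntegrable S volume a b) (hF_nonneg : ∀ i, ∀ t ∈ uIcc a b, 0 ≤ F i t)
    (hsum : ∀ t ∈ uIcc a b, HasSum (F · t) (S t)) :
    HasSum (fun i => ∫ t in a..b, F i t) (∫ t in a..b, S t) := by
  refine hasSum_integral_of_dominated_convergence F (fun i => (hF i).def'.aestronglyMeasurable)
    (fun i => .of_forall fun t ht => ?_)
    (.of_forall fun t ht => (hsum t (uIoc_subset_uIcc ht)).summable)
    (hS.congr fun t ht => ((hsum t (uIoc_subset_uIcc ht)).tsum_eq).symm)
    (.of_forall fun t ht => hsum t (uIoc_subset_uIcc ht))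
  rw [Real.norm_of_nonneg (hF_nonneg i t (uIoc_subset_uIcc ht))]

theorem norm_fourierCoeffOn_le_of_hasDerivAt {a b : ℝ} (hab : a < b) {f f' : ℝ → ℂ} {n : ℤ}
    (hn : n ≠ 0) (hf : ∀ t ∈ uIcc a b, HasDerivAt f (f' t) t)
    (hf' : IntervalIntegrable f' volume a b) (hfab : f a = f b) :
    ‖fourierCoeffOn hab f n‖ ≤ (b - a) / (2 * π) * ‖fourierCoeffOn hab f' n‖ := by
  have hn1 : (1 : ℝ) ≤ |(n : ℝ)| := by exact_mod_cast Int.one_le_abs hn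
  rw [fourierCoeffOn_of_hasDerivAt hab hn hf hf', hfab, sub_self, mul_zero, zero_sub, norm_mul,
    norm_neg, norm_mul, one_div, norm_inv]
  have hba : ‖(b : ℂ) - a‖ = b - a := by
    rw [← Complex.ofReal_sub, Complex.norm_real, Real.norm_of_nonneg (sub_nonneg.2 hab.le)]
  simp only [norm_mul, norm_neg, Complex.norm_ofNat, Complex.norm_real, Real.norm_of_nonneg pi_pos.le,
    Complex.norm_I, Complex.norm_intCast, hba]
  calc (2 * π * 1 * |(n : ℝ)|)⁻¹ * ((b - a) * ‖fourierCoeffOn hab f' n‖)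
      = (b - a) / (2 * π) * ‖fourierCoeffOn hab f' n‖ / |(n : ℝ)| := by
        field_simp
    _ ≤ (b - a) / (2 * π) * ‖fourierCoeffOn hab f' n‖ :=
        div_le_self (by have := sub_pos.2 hab; positivity) hn1

theorem Complex.integral_norm_sq_le_of_integral_eq_zero {f f' : ℝ → ℂ} {a b : ℝ}
    (hab : a < b) (hf : ∀ t ∈ uIcc a b, HasDerivAt f (f' t) t) (hf' : ContinuousOn f' (uIcc a b))
    (hfab : f a = f b) (hmean : ∫ t in a..b, f t = 0) :
    ∫ t in a..b, ‖f t‖ ^ 2 ≤ ((b - a) / (2 * π)) ^ 2 * ∫ t in a..b, ‖f' t‖ ^ 2 := by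
  have hf_cont : ContinuousOn f (uIcc a b) := fun t ht => (hf t ht).continuousAt.continuousWithinAt
  have hsum := hasSum_sq_fourierCoeffOn hab (hf_cont.memLp_restrict_Ioc 2)
  have hsum' := (hasSum_sq_fourierCoeffOn hab (hf'.memLp_restrict_Ioc 2)).mul_left
    (((b - a) / (2 * π)) ^ 2)
  have hcoeff : ∀ n, ‖fourierCoeffOn hab f n‖ ^ 2 ≤
      ((b - a) / (2 * π)) ^ 2 * ‖fourierCoeffOn hab f' n‖ ^ 2 := by
    intro n
    rcases eq_or_ne n 0 with rfl | hn
    · rw [fourierCoeffOn_eq_integral]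
      simp only [neg_zero, fourier_zero, one_smul, hmean, smul_zero, norm_zero,
        zero_pow two_ne_zero]
      positivity
    · rw [← mul_pow]
      exact pow_le_pow_left₀ (norm_nonneg _)
        (norm_fourierCoeffOn_le_of_hasDerivAt hab hn hf hf'.intervalIntegrable hfab) 2
  have := hasSum_le hcoeff hsum hsum'
  rw [smul_eq_mul, smul_eq_mul, mul_left_comm] at this
  exact le_of_mul_le_mul_left this (inv_pos.2 (sub_pos.2 hab))

theorem Real.integral_sq_le_of_integral_eq_zero {f f' : ℝ → ℝ} {a b : ℝ}
    (hab : a < b) (hf : ∀ t ∈ uIcc a b, HasDerivAt f (f' t) t) (hf' : ContinuousOn f' (uIcc a b))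
    (hfab : f a = f b) (hmean : ∫ t in a..b, f t = 0) :
    ∫ t in a..b, f t ^ 2 ≤ ((b - a) / (2 * π)) ^ 2 * ∫ t in a..b, f' t ^ 2 := by
  have key := Complex.integral_norm_sq_le_of_integral_eq_zero (f := fun t => (f t : ℂ))
    hab (fun t ht => (hf t ht).ofReal_comp) (Complex.continuous_ofReal.comp_continuousOn hf')
    (congrArg _ hfab) (by rw [intervalIntegral.integral_ofReal, hmean, Complex.ofReal_zero])
  simpa only [Complex.norm_real, Real.norm_eq_abs, sq_abs] using key

theorem HilbertBasis.hasSum_inner_sq_of_mem {E ι : Type*} [NormedAddCommGroup E]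
    [InnerProductSpace ℝ E] {F : Submodule ℝ E} (e : HilbertBasis ι ℝ F) {v : E} (hv : v ∈ F) :
    HasSum (fun i => ⟪(e i : E), v⟫_ℝ ^ 2) (‖v‖ ^ 2) := by
  have := e.hasSum_inner_mul_inner ⟨v, hv⟩ ⟨v, hv⟩
  simp only [Submodule.coe_inner, real_inner_comm _ v, ← sq, real_inner_self_eq_norm_sq] at this
  exact this

theorem integral_norm_sq_le_of_integral_eq_zero {E : Type*} [NormedAddCommGroup E]
    [InnerProductSpace ℝ E] [CompleteSpace E] {x x' : ℝ → E} {a b : ℝ}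
    (hab : a < b) (hx : ∀ t ∈ uIcc a b, HasDerivAt x (x' t) t) (hx' : ContinuousOn x' (uIcc a b))
    (hxab : x a = x b) (hmean : ∫ t in a..b, x t = 0) :
    ∫ t in a..b, ‖x t‖ ^ 2 ≤ ((b - a) / (2 * π)) ^ 2 * ∫ t in a..b, ‖x' t‖ ^ 2 := by
  have hx_cont : ContinuousOn x (uIcc a b) := fun t ht => (hx t ht).continuousAt.continuousWithinAt
  set F : Submodule ℝ E :=
    (Submodule.span ℝ (x '' uIcc a b ∪ x' '' uIcc a b)).topologicalClosure
  have hmem : ∀ t ∈ uIcc a b, x t ∈ F ∧ x' t ∈ F := fun t ht =>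
    ⟨Submodule.le_topologicalClosure _ (Submodule.subset_span (Or.inl ⟨t, ht, rfl⟩)),
      Submodule.le_topologicalClosure _ (Submodule.subset_span (Or.inr ⟨t, ht, rfl⟩))⟩
  have : TopologicalSpace.SeparableSpace F :=
    ((isCompact_uIcc.image_of_continuousOn hx_cont).union
      (isCompact_uIcc.image_of_continuousOn hx')).isSeparable.span.closure.separableSpace
  have : CompleteSpace F := (Submodule.isClosed_topologicalClosure _).completeSpace_coe
  obtain ⟨w, e, -⟩ := exists_hilbertBasis ℝ F
  have : Countable w := e.orthonormal.countable_of_separableSpace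
  have hcoord : ∀ i, ∫ t in a..b, ⟪(e i : E), x t⟫_ℝ ^ 2 ≤
      ((b - a) / (2 * π)) ^ 2 * ∫ t in a..b, ⟪(e i : E), x' t⟫_ℝ ^ 2 := fun i =>
    let φ := innerSL ℝ (e i : E)
    Real.integral_sq_le_of_integral_eq_zero hab
      (fun t ht => φ.hasFDerivAt.comp_hasDerivAt t (hx t ht)) (φ.continuous.comp_continuousOn hx')
      (by simp only [hxab])
      ((φ.intervalIntegral_comp_comm (hx_cont.intervalIntegrable)).trans (by simp [φ, hmean]))
  have hsum {y : ℝ → E} (hy : ContinuousOn y (uIcc a b)) (hyF : ∀ t ∈ uIcc a b, y t ∈ F) :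
      HasSum (fun i => ∫ t in a..b, ⟪(e i : E), y t⟫_ℝ ^ 2) (∫ t in a..b, ‖y t‖ ^ 2) :=
    hasSum_integral_of_nonneg
      (fun i => ((continuousOn_const.inner hy).pow 2).intervalIntegrable)
      ((hy.norm.pow 2).intervalIntegrable) (fun _ _ _ => sq_nonneg _)
      (fun t ht => e.hasSum_inner_sq_of_mem (hyF t ht))
  exact hasSum_le hcoord (hsum hx_cont fun t ht => (hmem t ht).1)
    ((hsum hx' fun t ht => (hmem t ht).2).mul_left _)

open Real in
theorem stmt_7 {E : Type*} [NormedAddCommGroup E] [InnerProductSpace ℝ E]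
    [CompleteSpace E] (x : ℝ → E)
    (hx : ContDiff ℝ 1 x) (hper : Function.Periodic x 1)
    (hmean : ∫ t in (0:ℝ)..1, x t = 0) :
    ∫ t in (0:ℝ)..1, ‖x t‖ ^ 2 ≤ (1 / (2 * π)) ^ 2 * ∫ t in (0:ℝ)..1, ‖deriv x t‖ ^ 2 := by
  simpa using integral_norm_sq_le_of_integral_eq_zero zero_lt_one
    (fun t _ => (hx.differentiable one_ne_zero t).hasDerivAt)
    (hx.continuous_deriv le_rfl).continuousOn (by simpa using (hper 0).symm) hmean
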